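/- Let (V_j)_{0≤j<n} be a snarl in ℝ^m with codimensions κ_j, κ_0 = max_j κ_j > 1, and let S′, S″ be a partition of {1,…,n−1} into nonempty sets; write V_{S′} = ⋂_{j∈S′} V_j and V_{S″} = ⋂_{j∈S″} V_j. Suppose W′ ⊆ V_{S′} and W″ ⊆ V_{S″} are subspaces of dimensions κ′, κ″ ≥ 1 with κ′ + κ″ = κ_0, W′ ∩ W″ = {0}, and (W′ + W″) ∩ V_0 = {0}. Define V_n = V_0 + W″ and V_{n+1} = V_0 + W′. Then V_n and V_{n+1} have codimensions κ′ and κ″ respectively, V_n ∩ V_{n+1} = V_0, and (V_1,…,V_{n−1},V_n,V_{n+1}) is a transverse splitting of (V_0,…,V_{n−1}). -/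

import Mathlib

open MeasureTheory Bornology

noncomputable section

/-- The codimension of a linear subspace of `ℝ^m`. -/
def codim {m : ℕ} (V : Submodule ℝ (Fin m → ℝ)) : ℕ :=
  m - Module.finrank ℝ V

/-- The ℓ¹ norm of the coefficients of a multivariate polynomial. -/
def polyL1Norm {σ : Type*} (P : MvPolynomial σ ℝ) : ℝ :=
  ∑ s ∈ P.support, |MvPolynomial.coeff s P|

/-- `P` is degenerate relative to the family `{π_j : j ∈ A}`. -/
def Degenerate {m : ℕ} (A : Finset ℕ) (κ : ℕ → ℕ)
    (π : ∀ j : ℕ, (Fin m → ℝ) →ₗ[ℝ] (Fin (κ j) → ℝ)) (P : MvPolynomial (Fin m) ℝ) : Prop :=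
  ∃ Q : ∀ j : ℕ, MvPolynomial (Fin (κ j)) ℝ,
    ∀ x : Fin m → ℝ, MvPolynomial.eval x P = ∑ j ∈ A, MvPolynomial.eval (π j x) (Q j)

/-- A fixed norm of the class of `P` in the quotient of polynomials of degree `≤ D`
modulo degenerate ones. -/
def normND {m : ℕ} (A : Finset ℕ) (κ : ℕ → ℕ) (D : ℕ)
    (π : ∀ j : ℕ, (Fin m → ℝ) →ₗ[ℝ] (Fin (κ j) → ℝ)) (P : MvPolynomial (Fin m) ℝ) : ℝ :=
  sInf {r : ℝ | ∃ Q : MvPolynomial (Fin m) ℝ,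
    Degenerate A κ π Q ∧ Q.totalDegree ≤ D ∧ r = polyL1Norm (P - Q)}

/-- The multilinear oscillatory integral form `I(P; f)`. -/
def oscInt {m : ℕ} (A : Finset ℕ) (κ : ℕ → ℕ)
    (π : ∀ j : ℕ, (Fin m → ℝ) →ₗ[ℝ] (Fin (κ j) → ℝ)) (P : MvPolynomial (Fin m) ℝ)
    (f : ∀ j : ℕ, (Fin (κ j) → ℝ) → ℂ) : ℂ :=
  ∫ x : Fin m → ℝ, Complex.exp (Complex.I * (MvPolynomial.eval x P : ℂ)) * ∏ j ∈ A, f j (π j x)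

/-- The uniform power decay property of a snarl `(V_j)_{j ∈ A}`. -/
def UniformPowerDecay {m : ℕ} (A : Finset ℕ) (κ : ℕ → ℕ)
    (V : ℕ → Submodule ℝ (Fin m → ℝ)) : Prop :=
  ∀ D : ℕ, ∃ γ : ℝ, 0 < γ ∧
    ∀ π : ∀ j : ℕ, (Fin m → ℝ) →ₗ[ℝ] (Fin (κ j) → ℝ),
      (∀ j ∈ A, Function.Surjective (π j)) →
      (∀ j ∈ A, LinearMap.ker (π j) = V j) →
      ∀ B : ∀ j : ℕ, Set (Fin (κ j) → ℝ), (∀ j ∈ A, IsBounded (B j)) →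
        ∃ C : ℝ, ∀ P : MvPolynomial (Fin m) ℝ, P.totalDegree ≤ D →
          0 < normND A κ D π P →
          ∀ f : ∀ j : ℕ, (Fin (κ j) → ℝ) → ℂ,
            (∀ j ∈ A, MemLp (f j) ⊤ volume) →
            (∀ j ∈ A, Function.support (f j) ⊆ B j) →
            ‖oscInt A κ π P f‖ ≤
              C * normND A κ D π P ^ (-γ) * ∏ j ∈ A, (eLpNorm (f j) ⊤ volume).toReal

/-- `(W_β)_{β ∈ B}` is a splitting of the snarl `(V_α)_{α ∈ A}`. -/
def IsSplitting {m : ℕ} (A B : Finset ℕ) (V W : ℕ → Submodule ℝ (Fin m → ℝ)) : Prop :=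
  ∃ α₀ β₁ β₂ : ℕ, α₀ ∈ A ∧ β₁ ∉ A ∧ β₂ ∉ A ∧ β₁ ≠ β₂ ∧ α₀ ∉ B ∧
    B = A.erase α₀ ∪ {β₁, β₂} ∧
    (∀ α ∈ A ∩ B, W α = V α) ∧
    (∀ β ∈ B, 1 ≤ codim (W β) ∧ codim (W β) < m) ∧
    W β₁ ⊓ W β₂ = V α₀ ∧
    codim (W β₁) + codim (W β₂) = codim (V α₀)

/-- `(W_β)_{β ∈ B}` is a transverse splitting of the snarl `(V_α)_{α ∈ A}`. -/
def IsTransverseSplitting {m : ℕ} (A B : Finset ℕ)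
    (V W : ℕ → Submodule ℝ (Fin m → ℝ)) : Prop :=
  ∃ α₀ β₁ β₂ : ℕ, α₀ ∈ A ∧ β₁ ∉ A ∧ β₂ ∉ A ∧ β₁ ≠ β₂ ∧ α₀ ∉ B ∧
    B = A.erase α₀ ∪ {β₁, β₂} ∧
    (∀ α ∈ A ∩ B, W α = V α) ∧
    (∀ β ∈ B, 1 ≤ codim (W β) ∧ codim (W β) < m) ∧
    W β₁ ⊓ W β₂ = V α₀ ∧
    codim (W β₁) + codim (W β₂) = codim (V α₀) ∧
    ∃ A₁ A₂ : Finset ℕ, A₁.Nonempty ∧ A₂.Nonempty ∧ Disjoint A₁ A₂ ∧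
      A₁ ∪ A₂ = A.erase α₀ ∧
      0 < Module.finrank ℝ ↥(W β₁ ⊓ ⨅ α ∈ A₁, V α) ∧
      0 < Module.finrank ℝ ↥(W β₂ ⊓ ⨅ α ∈ A₂, V α) ∧
      W β₁ ⊔ W β₂ = ⊤ ∧
      W β₁ ⊔ V α₀ ≠ ⊤ ∧ W β₂ ⊔ V α₀ ≠ ⊤

/-- A chain of transverse splittings whose terminal element is one-dimensional. -/
def IsResolution {m : ℕ} (N : ℕ) (As : ℕ → Finset ℕ)
    (Vs : ℕ → ℕ → Submodule ℝ (Fin m → ℝ)) : Prop :=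
  (∀ k < N, IsTransverseSplitting (As k) (As (k + 1)) (Vs k) (Vs (k + 1))) ∧
  ∀ α ∈ As N, codim (Vs N α) = 1

/-- A one-dimensional snarl is in general position if for every subset `A'` the
corresponding lines of linear functionals span a space of dimension `min (|A'|, m)`;
equivalently, `⋂_{α ∈ A'} V_α` has codimension `min (|A'|, m)`. -/
def OneDimGeneralPosition {m : ℕ} (A : Finset ℕ)
    (V : ℕ → Submodule ℝ (Fin m → ℝ)) : Prop :=
  ∀ A' ⊆ A, codim (⨅ α ∈ A', V α) = min A'.card m

/-- The set of `m × m` matrices of orthogonal projections of rank `m - κ`;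
these parametrize the Grassmannian of codimension-`κ` subspaces of `ℝ^m`. -/
def projGrass (m κ : ℕ) : Set (Fin m → Fin m → ℝ) :=
  {p | (Matrix.of p).IsSymm ∧ Matrix.of p * Matrix.of p = Matrix.of p ∧
       (Matrix.of p).rank = m - κ}

/-- The product of Grassmannians `G(m, (κ_α)_{α ∈ A})`. -/
def GrassProd (m : ℕ) (A : Finset ℕ) (κ : ℕ → ℕ) : Set (A → Fin m → Fin m → ℝ) :=
  {p | ∀ α : A, p α ∈ projGrass m (κ α)}

/-- The snarl associated with a point of the product of Grassmannians. -/
def snarlFun {m : ℕ} (A : Finset ℕ) (p : A → Fin m → Fin m → ℝ) :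
    ℕ → Submodule ℝ (Fin m → ℝ) :=
  fun j => if h : j ∈ A then LinearMap.range (Matrix.toLin' (Matrix.of (p ⟨j, h⟩))) else ⊥

/-- `X` is an analytic subvariety of positive codimension of `G`: a closed subset
locally contained in the zero set of a real-analytic function which does not vanish
identically on any (relatively) open subset of `G`. -/
def IsAnalyticSubvarietyPosCodim {E : Type*} [NormedAddCommGroup E] [NormedSpace ℝ E]
    (G X : Set E) : Prop :=
  X ⊆ G ∧ IsClosed X ∧
    ∀ p ∈ G, ∃ U : Set E, IsOpen U ∧ p ∈ U ∧
      ∃ f : E → ℝ, AnalyticOnNhd ℝ f U ∧ (∀ x ∈ X ∩ U, f x = 0) ∧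
        ∀ O : Set E, IsOpen O → (O ∩ U ∩ G).Nonempty → ∃ x ∈ O ∩ U ∩ G, f x ≠ 0

/-!
Since `W₁`, `W₂` and `V₀` are independent, adjoining `W₂` (resp. `W₁`) to `V₀` lowers its
codimension `κ₀ = κ' + κ''` by `κ''` (resp. `κ'`); by the modular law the two enlarged
spaces meet exactly in `V₀`, and together they contain `V₀ ⊕ W₁ ⊕ W₂ = ℝ^m`. Transversality
is witnessed by the partition `S₂, S₁`: the space `V₀ + W₂` meets `V_{S₂}` in `W₂ ≠ 0`, and
`V₀ + W₁` meets `V_{S₁}` in `W₁ ≠ 0`.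
-/

open Module

theorem sup_inf_sup_eq_left_of_disjoint {α : Type*} [Lattice α] [OrderBot α]
    [IsModularLattice α] {a b c : α} (hbc : Disjoint b c) (habc : Disjoint (b ⊔ c) a) :
    (a ⊔ c) ⊓ (a ⊔ b) = a := by
  have hca : Disjoint c (a ⊔ b) := by
    rw [sup_comm a b]
    exact hbc.symm.disjoint_sup_right_of_disjoint_sup_left (by rwa [sup_comm])
  rw [sup_inf_assoc_of_le c le_sup_left, hca.eq_bot, sup_bot_eq]

theorem Submodule.finrank_sup_of_disjoint {K E : Type*} [DivisionRing K] [AddCommGroup E]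
    [Module K E] {s t : Submodule K E} [FiniteDimensional K s] [FiniteDimensional K t]
    (h : Disjoint s t) : finrank K ↥(s ⊔ t) = finrank K s + finrank K t := by
  have := Submodule.finrank_sup_add_finrank_inf_eq s t
  rwa [h.eq_bot, finrank_bot, add_zero] at this

section Codim

variable {m : ℕ}

theorem codim_sup_add_finrank {V W : Submodule ℝ (Fin m → ℝ)} (h : Disjoint V W) :
    codim (V ⊔ W) + finrank ℝ W = codim V := by
  have hle := Submodule.finrank_le (V ⊔ W)
  rw [finrank_fin_fun, Submodule.finrank_sup_of_disjoint h] at hle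
  rw [codim, codim, Submodule.finrank_sup_of_disjoint h]
  omega

theorem codim_eq_zero_iff {V : Submodule ℝ (Fin m → ℝ)} : codim V = 0 ↔ V = ⊤ := by
  have hle := Submodule.finrank_le V
  rw [finrank_fin_fun] at hle
  constructor
  · intro h
    apply Submodule.eq_top_of_finrank_eq
    rw [codim] at h
    rw [finrank_fin_fun]
    omega
  · rintro rfl
    simp [codim]

end Codim

theorem isTransverseSplitting_split_zero {m n : ℕ} (V : ℕ → Submodule ℝ (Fin m → ℝ))
    (X Y : Submodule ℝ (Fin m → ℝ)) (hn : 0 < n)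
    (hcodim : ∀ j ∈ Finset.Ico 1 n, 1 ≤ codim (V j) ∧ codim (V j) < m)
    (hX : 1 ≤ codim X ∧ codim X < m) (hY : 1 ≤ codim Y ∧ codim Y < m)
    (hXY : X ⊓ Y = V 0) (hcodimXY : codim X + codim Y = codim (V 0))
    (S₁ S₂ : Finset ℕ) (hS₁ : S₁.Nonempty) (hS₂ : S₂.Nonempty) (hdisj : Disjoint S₁ S₂)
    (hunion : S₁ ∪ S₂ = Finset.Ico 1 n)
    (hXS₁ : 0 < finrank ℝ ↥(X ⊓ ⨅ j ∈ S₁, V j)) (hYS₂ : 0 < finrank ℝ ↥(Y ⊓ ⨅ j ∈ S₂, V j))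
    (hXsupY : X ⊔ Y = ⊤) :
    IsTransverseSplitting (Finset.range n) ((Finset.range n).erase 0 ∪ {n, n + 1}) V
      (fun j => if j = n then X else if j = n + 1 then Y else V j) := by
  set W : ℕ → Submodule ℝ (Fin m → ℝ) :=
    fun j => if j = n then X else if j = n + 1 then Y else V j
  have hWn : W n = X := if_pos rfl
  have hWn₁ : W (n + 1) = Y := by simp [W]
  have hW {j : ℕ} (hj : j < n) : W j = V j := by
    simp only [W, if_neg hj.ne, if_neg (show j ≠ n + 1 by omega)]
  have herase : (Finset.range n).erase 0 = Finset.Ico 1 n := by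
    ext j
    simp only [Finset.mem_erase, Finset.mem_range, Finset.mem_Ico]
    omega
  have hsup_ne_top {Z : Submodule ℝ (Fin m → ℝ)} (hZ : 1 ≤ codim Z) (hV : V 0 ≤ Z) :
      Z ⊔ V 0 ≠ ⊤ := by
    rw [sup_eq_left.mpr hV, Ne, ← codim_eq_zero_iff]
    omega
  refine ⟨0, n, n + 1, by simpa using hn, by simp, by simp, by omega, by simp; omega, rfl,
    ?_, ?_, by rwa [hWn, hWn₁], by rwa [hWn, hWn₁],
    S₁, S₂, hS₁, hS₂, hdisj, hunion.trans herase.symm, ?_⟩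
  · intro j hj
    exact hW (Finset.mem_range.mp (Finset.mem_inter.mp hj).1)
  · intro j hj
    rw [herase] at hj
    rcases Finset.mem_union.mp hj with hj | hj
    · rw [hW (Finset.mem_Ico.mp hj).2]
      exact hcodim j hj
    · rcases Finset.mem_insert.mp hj with rfl | hj
      · rwa [hWn]
      · rwa [Finset.mem_singleton.mp hj, hWn₁]
  · rw [hWn, hWn₁]
    exact ⟨hXS₁, hYS₂, hXsupY, hsup_ne_top hX.1 (hXY ▸ inf_le_left),
      hsup_ne_top hY.1 (hXY ▸ inf_le_right)⟩

theorem statement6_general {m n : ℕ} (V : ℕ → Submodule ℝ (Fin m → ℝ)) (κ : ℕ → ℕ)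
    (hsnarl : ∀ j < n, 1 ≤ κ j ∧ κ j < m ∧ codim (V j) = κ j)
    (hn : 0 < n)
    (S₁ S₂ : Finset ℕ) (hS₁ : S₁.Nonempty) (hS₂ : S₂.Nonempty)
    (hdisj : Disjoint S₁ S₂) (hunion : S₁ ∪ S₂ = Finset.Ico 1 n)
    (W₁ W₂ : Submodule ℝ (Fin m → ℝ)) (κ' κ'' : ℕ) (hκ' : 1 ≤ κ') (hκ'' : 1 ≤ κ'')
    (hκsum : κ' + κ'' = κ 0)
    (hW₁ : W₁ ≤ ⨅ j ∈ S₁, V j) (hW₂ : W₂ ≤ ⨅ j ∈ S₂, V j)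
    (hdim₁ : Module.finrank ℝ ↥W₁ = κ') (hdim₂ : Module.finrank ℝ ↥W₂ = κ'')
    (hint : W₁ ⊓ W₂ = ⊥) (hint0 : (W₁ ⊔ W₂) ⊓ V 0 = ⊥) :
    codim (V 0 ⊔ W₂) = κ' ∧ codim (V 0 ⊔ W₁) = κ'' ∧
    (V 0 ⊔ W₂) ⊓ (V 0 ⊔ W₁) = V 0 ∧
    IsTransverseSplitting (Finset.range n) ((Finset.range n).erase 0 ∪ {n, n + 1}) V
      (fun j => if j = n then V 0 ⊔ W₂ else if j = n + 1 then V 0 ⊔ W₁ else V j) := by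
  obtain ⟨-, hκ₀m, hcod₀⟩ := hsnarl 0 hn
  have hW₁₂ : Disjoint W₁ W₂ := disjoint_iff.mpr hint
  have hWV : Disjoint (W₁ ⊔ W₂) (V 0) := disjoint_iff.mpr hint0
  have hcodX : codim (V 0 ⊔ W₂) = κ' := by
    have := codim_sup_add_finrank (hWV.mono_left le_sup_right).symm
    omega
  have hcodY : codim (V 0 ⊔ W₁) = κ'' := by
    have := codim_sup_add_finrank (hWV.mono_left le_sup_left).symm
    omega
  have hinf : (V 0 ⊔ W₂) ⊓ (V 0 ⊔ W₁) = V 0 := sup_inf_sup_eq_left_of_disjoint hW₁₂ hWV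
  have htop : (V 0 ⊔ W₂) ⊔ (V 0 ⊔ W₁) = ⊤ := by
    rw [sup_sup_sup_comm, sup_idem, sup_comm W₂, ← codim_eq_zero_iff]
    have := codim_sup_add_finrank hWV.symm
    rw [Submodule.finrank_sup_of_disjoint hW₁₂] at this
    omega
  refine ⟨hcodX, hcodY, hinf, isTransverseSplitting_split_zero V _ _ hn ?_ (by omega) (by omega)
    hinf (by omega) S₂ S₁ hS₂ hS₁ hdisj.symm (by rw [Finset.union_comm, hunion]) ?_ ?_ htop⟩
  · intro j hj
    obtain ⟨hpos, hlt, hcod⟩ := hsnarl j (Finset.mem_Ico.mp hj).2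
    omega
  · exact lt_of_lt_of_le (by omega) (Submodule.finrank_mono (le_inf le_sup_right hW₂))
  · exact lt_of_lt_of_le (by omega) (Submodule.finrank_mono (le_inf le_sup_right hW₁))

/-- Given `W₁ ⊆ ⋂_{j∈S₁} V_j`, `W₂ ⊆ ⋂_{j∈S₂} V_j` of dimensions `κ', κ''` with
`κ' + κ'' = κ_0`, `W₁ ∩ W₂ = {0}` and `(W₁ + W₂) ∩ V_0 = {0}`, setting
`V_n = V_0 + W₂` and `V_{n+1} = V_0 + W₁`, the new subspaces have codimensions
`κ'` and `κ''` respectively, `V_n ∩ V_{n+1} = V_0`, and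
`(V_1,…,V_{n−1},V_n,V_{n+1})` is a transverse splitting of `(V_0,…,V_{n−1})`. -/
theorem statement6 {m n : ℕ} (V : ℕ → Submodule ℝ (Fin m → ℝ)) (κ : ℕ → ℕ)
    (hsnarl : ∀ j < n, 1 ≤ κ j ∧ κ j < m ∧ codim (V j) = κ j)
    (hmax : ∀ j < n, κ j ≤ κ 0) (hκ0 : 1 < κ 0) (hn : 0 < n)
    (S₁ S₂ : Finset ℕ) (hS₁ : S₁.Nonempty) (hS₂ : S₂.Nonempty)
    (hdisj : Disjoint S₁ S₂) (hunion : S₁ ∪ S₂ = Finset.Ico 1 n)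
    (W₁ W₂ : Submodule ℝ (Fin m → ℝ)) (κ' κ'' : ℕ) (hκ' : 1 ≤ κ') (hκ'' : 1 ≤ κ'')
    (hκsum : κ' + κ'' = κ 0)
    (hW₁ : W₁ ≤ ⨅ j ∈ S₁, V j) (hW₂ : W₂ ≤ ⨅ j ∈ S₂, V j)
    (hdim₁ : Module.finrank ℝ ↥W₁ = κ') (hdim₂ : Module.finrank ℝ ↥W₂ = κ'')
    (hint : W₁ ⊓ W₂ = ⊥) (hint0 : (W₁ ⊔ W₂) ⊓ V 0 = ⊥) :
    codim (V 0 ⊔ W₂) = κ' ∧ codim (V 0 ⊔ W₁) = κ'' ∧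
    (V 0 ⊔ W₂) ⊓ (V 0 ⊔ W₁) = V 0 ∧
    IsTransverseSplitting (Finset.range n) ((Finset.range n).erase 0 ∪ {n, n + 1}) V
      (fun j => if j = n then V 0 ⊔ W₂ else if j = n + 1 then V 0 ⊔ W₁ else V j) :=
  statement6_general V κ hsnarl hn S₁ S₂ hS₁ hS₂ hdisj hunion W₁ W₂ κ' κ'' hκ' hκ'' hκsum hW₁ hW₂
    hdim₁ hdim₂ hint hint0

end
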